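/- arXiv:2303.16241 — 5 statements merged into one kernel-verified Lean document; each statement's English description precedes it below -/
import Mathlib

section
/- Let J : ℝ^d → ℝ be C¹ with ∇J globally Lipschitz with constant L. Fix θ ∈ ℝ^d, c > 0, and let Δ ∈ {−1,1}^d have i.i.d. Rademacher components. Define V = (J(θ + cΔ) − J(θ − cΔ))/(2c) and y_i = V/Δ_i = V·Δ_i. Then for each i, E[y_i] differs from [∇J(θ)]_i by at most c·d·L/2; consequently ‖E[y] − ∇J(θ)‖ ≤ c·d^{3/2}·L/2. -/
/-!
Integrating the Lipschitz bound on `∇J` along segments gives the descent lemma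
`|J (θ + h) - J θ - ⟪∇J θ, h⟫| ≤ L/2 ‖h‖²`; applied to `h = ±cΔ` it shows that the central
difference `V` is within `c ‖Δ‖² L / 2 = c d L / 2` of the linear term `⟪∇J θ, Δ⟫`. Since the
coordinates of `Δ` are pairwise independent, centred and square to one, `E[Δ_j Δ_i] = δ_ij`, so
`E[⟪∇J θ, Δ⟫ Δ_i] = [∇J θ]_i` and the bias of `y_i` is `E[(V - ⟪∇J θ, Δ⟫) Δ_i]`, at most
`c d L / 2` in absolute value. The Euclidean bound follows by summing the `d` squared biases.
-/
open MeasureTheory ProbabilityTheory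
open scoped NNReal RealInnerProductSpace

section GradientLipschitz

variable {E : Type*} [NormedAddCommGroup E] [InnerProductSpace ℝ E] [CompleteSpace E]
  {f : E → ℝ} {L : ℝ≥0}

theorem abs_sub_sub_inner_gradient_le (hf : Differentiable ℝ f)
    (hL : LipschitzWith L (gradient f)) (x h : E) :
    |f (x + h) - f x - ⟪gradient f x, h⟫| ≤ L / 2 * ‖h‖ ^ 2 := by
  set φ : ℝ → ℝ := fun t => f (x + t • h) - f x - t * ⟪gradient f x, h⟫
  have hφ : ∀ t, HasDerivAt φ ⟪gradient f (x + t • h) - gradient f x, h⟫ t := fun t => by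
    have hline : HasDerivAt (fun t : ℝ => x + t • h) h t := by
      simpa using ((hasDerivAt_id t).smul_const h).const_add x
    have := ((hf _).hasFDerivAt.comp_hasDerivAt t hline).sub_const (f x) |>.sub
      ((hasDerivAt_id t).mul_const ⟪gradient f x, h⟫)
    exact this.congr_deriv (by simp [inner_sub_left, inner_gradient_left])
  have hbound : ∀ t ∈ Set.Ico (0 : ℝ) 1,
      ‖⟪gradient f (x + t • h) - gradient f x, h⟫‖ ≤ L * ‖h‖ ^ 2 * t := fun t ht => by
    calc ‖⟪gradient f (x + t • h) - gradient f x, h⟫‖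
        ≤ ‖gradient f (x + t • h) - gradient f x‖ * ‖h‖ := norm_inner_le_norm _ _
      _ ≤ L * ‖t • h‖ * ‖h‖ := by
          gcongr
          simpa [dist_eq_norm] using hL.dist_le_mul (x + t • h) x
      _ = L * ‖h‖ ^ 2 * t := by
          rw [norm_smul, Real.norm_of_nonneg ht.1]
          ring
  have hB : ∀ t, HasDerivAt (fun t => L / 2 * ‖h‖ ^ 2 * t ^ 2) (L * ‖h‖ ^ 2 * t) t := fun t =>
    ((hasDerivAt_pow 2 t).const_mul _).congr_deriv (by ring)
  have := image_norm_le_of_norm_deriv_right_le_deriv_boundary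
    (fun t _ => (hφ t).continuousAt.continuousWithinAt) (fun t _ => (hφ t).hasDerivWithinAt)
    (by simp [φ]) hB hbound (Set.right_mem_Icc.2 zero_le_one)
  simpa [φ] using this

theorem abs_sub_sub_two_inner_gradient_le (hf : Differentiable ℝ f)
    (hL : LipschitzWith L (gradient f)) (x h : E) :
    |f (x + h) - f (x - h) - 2 * ⟪gradient f x, h⟫| ≤ L * ‖h‖ ^ 2 := by
  have hplus := abs_sub_sub_inner_gradient_le hf hL x h
  have hminus := abs_sub_sub_inner_gradient_le hf hL x (-h)
  rw [← sub_eq_add_neg, inner_neg_right, norm_neg] at hminus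
  calc |f (x + h) - f (x - h) - 2 * ⟪gradient f x, h⟫|
      = |(f (x + h) - f x - ⟪gradient f x, h⟫) - (f (x - h) - f x - -⟪gradient f x, h⟫)| := by
        ring_nf
    _ ≤ L / 2 * ‖h‖ ^ 2 + L / 2 * ‖h‖ ^ 2 := (abs_sub _ _).trans (add_le_add hplus hminus)
    _ = L * ‖h‖ ^ 2 := by ring

theorem abs_centralDifference_sub_inner_gradient_le (hf : Differentiable ℝ f)
    (hL : LipschitzWith L (gradient f)) {c : ℝ} (hc : 0 < c) (x v : E) :
    |(f (x + c • v) - f (x - c • v)) / (2 * c) - ⟪gradient f x, v⟫| ≤ c * ‖v‖ ^ 2 * L / 2 := by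
  have h := abs_sub_sub_two_inner_gradient_le hf hL x (c • v)
  rw [inner_smul_right, norm_smul, Real.norm_of_nonneg hc.le] at h
  rw [show (f (x + c • v) - f (x - c • v)) / (2 * c) - ⟪gradient f x, v⟫
      = (f (x + c • v) - f (x - c • v) - 2 * (c * ⟪gradient f x, v⟫)) / (2 * c) by
        field_simp,
    abs_div, abs_of_pos (by positivity : (0 : ℝ) < 2 * c), div_le_iff₀ (by positivity)]
  calc _ ≤ L * (c * ‖v‖) ^ 2 := h
    _ = c * ‖v‖ ^ 2 * L / 2 * (2 * c) := by ring

end GradientLipschitz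

theorem EuclideanSpace.norm_sq_eq_card_of_forall_abs_eq_one {ι : Type*} [Fintype ι]
    {v : EuclideanSpace ℝ ι} (hv : ∀ i, |v i| = 1) : ‖v‖ ^ 2 = Fintype.card ι := by
  rw [EuclideanSpace.norm_sq_eq]
  simp [hv]

theorem EuclideanSpace.inner_mul_apply_eq_sum {ι : Type*} [Fintype ι]
    (g v : EuclideanSpace ℝ ι) (i : ι) : ⟪g, v⟫ * v i = ∑ j, g j * (v j * v i) := by
  simp [PiLp.inner_apply, Finset.mul_sum, mul_comm, mul_left_comm]

theorem Real.sqrt_sum_sq_le_sqrt_card_mul {ι : Type*} [Fintype ι] {a : ι → ℝ} {B : ℝ}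
    (hB : 0 ≤ B) (ha : ∀ i, |a i| ≤ B) : √(∑ i, a i ^ 2) ≤ √(Fintype.card ι) * B := by
  rw [← Real.sqrt_sq hB, ← Real.sqrt_mul (Nat.cast_nonneg _)]
  refine Real.sqrt_le_sqrt ?_
  calc ∑ i, a i ^ 2 ≤ ∑ _i : ι, B ^ 2 :=
        Finset.sum_le_sum fun i _ => sq_le_sq' (neg_le_of_abs_le (ha i)) (le_of_abs_le (ha i))
    _ = Fintype.card ι * B ^ 2 := by simp

section Rademacher

variable {Ω : Type*} {m0 : MeasurableSpace Ω} {μ : Measure Ω} {X Y : Ω → ℝ}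

theorem integrable_mul_of_ae_eq_one_or_neg_one [IsFiniteMeasure μ] (hXm : Measurable X)
    (hYm : Measurable Y) (hX : ∀ᵐ ω ∂μ, X ω = 1 ∨ X ω = -1) (hY : ∀ᵐ ω ∂μ, Y ω = 1 ∨ Y ω = -1) :
    Integrable (fun ω => X ω * Y ω) μ := by
  refine .of_bound (hXm.mul hYm).aestronglyMeasurable 1 ?_
  filter_upwards [hX, hY] with ω hXω hYω
  rcases hXω with h | h <;> rcases hYω with h' | h' <;> simp [h, h']

theorem integral_eq_zero_of_ae_eq_one_or_neg_one [IsProbabilityMeasure μ] (hXm : Measurable X)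
    (hX : ∀ᵐ ω ∂μ, X ω = 1 ∨ X ω = -1) (hX1 : μ {ω | X ω = 1} = 1 / 2) : ∫ ω, X ω ∂μ = 0 := by
  have hs : MeasurableSet {ω | X ω = 1} := hXm (measurableSet_singleton 1)
  have hX_eq : X =ᵐ[μ] fun ω => Set.indicator {ω | X ω = 1} (fun _ => (2 : ℝ)) ω - 1 := by
    filter_upwards [hX] with ω hω
    rcases hω with h | h <;> simp [Set.indicator_apply, h] <;> norm_num
  rw [integral_congr_ae hX_eq,
    integral_sub ((integrable_const 2).indicator hs) (integrable_const 1),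
    integral_indicator_const 2 hs, measureReal_def, hX1]
  simp

variable [IsProbabilityMeasure μ] {ι : Type*} [Fintype ι] {Δ : Ω → EuclideanSpace ℝ ι}

theorem integral_apply_mul_apply_of_rademacher [DecidableEq ι] (hΔm : Measurable Δ)
    (hsign : ∀ i, ∀ᵐ ω ∂μ, Δ ω i = 1 ∨ Δ ω i = -1) (hprob : ∀ i, μ {ω | Δ ω i = 1} = 1 / 2)
    (hind : Pairwise fun i j => IndepFun (fun ω => Δ ω i) (fun ω => Δ ω j) μ) (i j : ι) :
    ∫ ω, Δ ω i * Δ ω j ∂μ = if i = j then 1 else 0 := by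
  split_ifs with hij
  · subst hij
    have hsq : (fun ω => Δ ω i * Δ ω i) =ᵐ[μ] fun _ => 1 := by
      filter_upwards [hsign i] with ω h
      rcases h with h | h <;> simp [h]
    simp [integral_congr_ae hsq]
  · rw [(hind hij).integral_fun_mul_eq_mul_integral (by fun_prop) (by fun_prop),
      integral_eq_zero_of_ae_eq_one_or_neg_one (by fun_prop) (hsign i) (hprob i), zero_mul]

theorem integrable_inner_mul_apply_of_rademacher (hΔm : Measurable Δ)
    (hsign : ∀ i, ∀ᵐ ω ∂μ, Δ ω i = 1 ∨ Δ ω i = -1) (g : EuclideanSpace ℝ ι) (i : ι) :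
    Integrable (fun ω => ⟪g, Δ ω⟫ * Δ ω i) μ := by
  simp_rw [EuclideanSpace.inner_mul_apply_eq_sum]
  exact integrable_finsetSum _ fun j _ => (integrable_mul_of_ae_eq_one_or_neg_one
    (by fun_prop) (by fun_prop) (hsign j) (hsign i)).const_mul (g j)

theorem integral_inner_mul_apply_of_rademacher (hΔm : Measurable Δ)
    (hsign : ∀ i, ∀ᵐ ω ∂μ, Δ ω i = 1 ∨ Δ ω i = -1) (hprob : ∀ i, μ {ω | Δ ω i = 1} = 1 / 2)
    (hind : Pairwise fun i j => IndepFun (fun ω => Δ ω i) (fun ω => Δ ω j) μ)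
    (g : EuclideanSpace ℝ ι) (i : ι) :
    ∫ ω, ⟪g, Δ ω⟫ * Δ ω i ∂μ = g i := by
  classical
  simp_rw [EuclideanSpace.inner_mul_apply_eq_sum]
  rw [integral_finsetSum _ fun j _ => (integrable_mul_of_ae_eq_one_or_neg_one
    (by fun_prop) (by fun_prop) (hsign j) (hsign i)).const_mul (g j)]
  simp_rw [integral_const_mul, integral_apply_mul_apply_of_rademacher hΔm hsign hprob hind]
  simp

theorem abs_integral_mul_apply_sub_le_of_rademacher {V : Ω → ℝ} {g : EuclideanSpace ℝ ι} {B : ℝ}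
    (hVm : AEStronglyMeasurable V μ) (hΔm : Measurable Δ)
    (hsign : ∀ i, ∀ᵐ ω ∂μ, Δ ω i = 1 ∨ Δ ω i = -1) (hprob : ∀ i, μ {ω | Δ ω i = 1} = 1 / 2)
    (hind : Pairwise fun i j => IndepFun (fun ω => Δ ω i) (fun ω => Δ ω j) μ)
    (hVB : ∀ᵐ ω ∂μ, |V ω - ⟪g, Δ ω⟫| ≤ B) (i : ι) :
    |∫ ω, V ω * Δ ω i ∂μ - g i| ≤ B := by
  have hlin := integrable_inner_mul_apply_of_rademacher hΔm hsign g i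
  have herr_bound : ∀ᵐ ω ∂μ, ‖(V ω - ⟪g, Δ ω⟫) * Δ ω i‖ ≤ B := by
    filter_upwards [hVB, hsign i] with ω hω hΔω
    rwa [norm_mul, Real.norm_eq_abs, Real.norm_eq_abs, (abs_eq zero_le_one).2 hΔω, mul_one]
  have herr : Integrable (fun ω => (V ω - ⟪g, Δ ω⟫) * Δ ω i) μ :=
    .of_bound (by fun_prop) B herr_bound
  calc |∫ ω, V ω * Δ ω i ∂μ - g i|
      = ‖∫ ω, (V ω - ⟪g, Δ ω⟫) * Δ ω i ∂μ‖ := by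
        rw [← integral_inner_mul_apply_of_rademacher hΔm hsign hprob hind g i,
          ← integral_sub ((herr.add hlin).congr (.of_forall fun ω => by simp [sub_mul])) hlin]
        simp [sub_mul]
    _ ≤ B := by simpa using norm_integral_le_of_norm_le_const herr_bound

end Rademacher

theorem stmt7 {Ω : Type*} {m0 : MeasurableSpace Ω} (μ : Measure Ω) [IsProbabilityMeasure μ]
    {d : ℕ} (J : EuclideanSpace ℝ (Fin d) → ℝ) (L : NNReal)
    (hJ : ContDiff ℝ 1 J) (hL : LipschitzWith L (gradient J))
    (θ : EuclideanSpace ℝ (Fin d)) (c : ℝ) (hc : 0 < c)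
    (Δ : Ω → EuclideanSpace ℝ (Fin d)) (hΔmeas : Measurable Δ)
    (hsign : ∀ i, ∀ᵐ ω ∂μ, Δ ω i = 1 ∨ Δ ω i = -1)
    (hprob : ∀ i, μ {ω | Δ ω i = 1} = 1 / 2)
    (hiid : iIndepFun (fun i ω => Δ ω i) μ)
    (V : Ω → ℝ) (hV : ∀ ω, V ω = (J (θ + c • Δ ω) - J (θ - c • Δ ω)) / (2 * c))
    (y : Fin d → Ω → ℝ) (hy : ∀ i ω, y i ω = V ω * Δ ω i) :
    (∀ i, |(∫ ω, y i ω ∂μ) - gradient J θ i| ≤ c * d * L / 2) ∧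
      Real.sqrt (∑ i, ((∫ ω, y i ω ∂μ) - gradient J θ i) ^ 2)
        ≤ c * (d : ℝ) ^ ((3 : ℝ) / 2) * L / 2 := by
  obtain rfl : y = fun i ω => V ω * Δ ω i := funext fun i => funext (hy i)
  have hVm : Measurable V := by
    rw [funext hV]
    have := hJ.continuous.measurable
    fun_prop
  have hVB : ∀ᵐ ω ∂μ, |V ω - ⟪gradient J θ, Δ ω⟫| ≤ c * d * L / 2 := by
    filter_upwards [ae_all_iff.2 hsign] with ω hω
    have hnorm := EuclideanSpace.norm_sq_eq_card_of_forall_abs_eq_one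
      fun i => (abs_eq zero_le_one).2 (hω i)
    simpa [hV, hnorm] using abs_centralDifference_sub_inner_gradient_le
      (hJ.differentiable one_ne_zero) hL hc θ (Δ ω)
  have hbias := abs_integral_mul_apply_sub_le_of_rademacher hVm.aestronglyMeasurable hΔmeas
    hsign hprob (fun i j hij => hiid.indepFun hij) hVB
  refine ⟨hbias, ?_⟩
  have hpow : (d : ℝ) ^ ((3 : ℝ) / 2) = d * √d := by
    rw [show (3 : ℝ) / 2 = 1 + 1 / 2 by norm_num, Real.rpow_add' (by positivity) (by norm_num),
      Real.rpow_one, Real.sqrt_eq_rpow]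
  calc √(∑ i, (∫ ω, V ω * Δ ω i ∂μ - gradient J θ i) ^ 2) ≤ √d * (c * d * L / 2) := by
        simpa using Real.sqrt_sum_sq_le_sqrt_card_mul (by positivity) hbias
    _ = c * (d : ℝ) ^ ((3 : ℝ) / 2) * L / 2 := by rw [hpow]; ring
end

section
/- (Robbins–Siegmund) Let (z_t), (δ_t), (γ_t), (ψ_t) be nonnegative stochastic processes adapted to a filtration (F_t), satisfying E[z_{t+1}|F_t] ≤ (1+δ_t)z_t + γ_t − ψ_t almost surely for all t. Then on the event {Σδ_t < ∞ and Σγ_t < ∞}, the limit lim_{t→∞} z_t exists (finite) and Σ_t ψ_t < ∞, almost surely. -/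
/-
Divide by the discount `A t = ∏_{s<t} (1 + δ s)`: the compensated process
`Y t = z t / A t + ∑_{s<t} (ψ s - γ s) / A (s + 1)` is a supermartingale with
`Y (t + 1) ≥ -∑_{s≤t} γ s`, a predictable lower bound. Stopping `Y` just before `∑_{s≤t} γ s`
exceeds a level `a` (a martingale transform with weights in `{0, 1}`) gives a supermartingale
bounded below by `-a - |Y 0|`, hence L¹-bounded and a.e. convergent; on `{∑ γ ≤ a}` it is `Y - Y 0`.
So `Y` converges a.e. on `{∑ γ < ∞}`. On `{∑ δ < ∞}` the discount increases to a finite limit,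
the partial sums of `ψ s / A (s + 1)` are bounded by `sup Y + ∑ γ`, so `∑ ψ < ∞`, and
`z t = A t * (Y t - ∑_{s<t} (ψ s - γ s) / A (s + 1))` converges.
-/

open MeasureTheory Filter Finset

noncomputable def stopWeight (h : ℕ → ℝ) (a : ℝ) (i : ℕ) : ℝ :=
  if ∀ j ≤ i, h j ≤ a then 1 else 0

section StopWeight
variable {y h : ℕ → ℝ} {a : ℝ}

theorem sum_stopWeight_mul_sub_of_forall_le {n : ℕ} (hh : ∀ j < n, h j ≤ a) :
    ∑ i ∈ range n, stopWeight h a i * (y (i + 1) - y i) = y n - y 0 := by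
  rw [← sum_range_sub y]
  refine sum_congr rfl fun i hi => ?_
  rw [stopWeight, if_pos fun j hj => hh j (hj.trans_lt (mem_range.mp hi)), one_mul]

theorem exists_sum_stopWeight_mul_sub_eq (y h : ℕ → ℝ) (a : ℝ) (n : ℕ) :
    ∃ k, (∀ j < k, h j ≤ a) ∧ ∑ i ∈ range n, stopWeight h a i * (y (i + 1) - y i) = y k - y 0 := by
  induction n with
  | zero => exact ⟨0, by simp, by simp⟩
  | succ n ih =>
    by_cases hn : ∀ j ≤ n, h j ≤ a
    · exact ⟨n + 1, fun j hj => hn j (Nat.lt_succ_iff.mp hj),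
        sum_stopWeight_mul_sub_of_forall_le fun j hj => hn j (Nat.lt_succ_iff.mp hj)⟩
    · obtain ⟨k, hk, hsum⟩ := ih
      refine ⟨k, hk, ?_⟩
      rw [sum_range_succ, stopWeight, if_neg hn, zero_mul, add_zero, hsum]

theorem neg_sub_abs_le_sum_stopWeight_mul_sub (hy : ∀ n, -h n ≤ y (n + 1)) (ha : 0 ≤ a) (n : ℕ) :
    -a - |y 0| ≤ ∑ i ∈ range n, stopWeight h a i * (y (i + 1) - y i) := by
  obtain ⟨k, hk, hsum⟩ := exists_sum_stopWeight_mul_sub_eq y h a n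
  rw [hsum]
  cases k with
  | zero => linarith [sub_self (y 0), abs_nonneg (y 0)]
  | succ k => linarith [hy k, hk k k.lt_succ_self, le_abs_self (y 0)]

theorem stopWeight_nonneg (i : ℕ) : 0 ≤ stopWeight h a i := by
  unfold stopWeight; split_ifs <;> norm_num

theorem stopWeight_le_one (i : ℕ) : stopWeight h a i ≤ 1 := by
  unfold stopWeight; split_ifs <;> norm_num

end StopWeight

namespace MeasureTheory

variable {Ω : Type*} {m0 : MeasurableSpace Ω} {μ : Measure Ω} {ℱ : Filtration ℕ m0}

theorem Supermartingale.exists_ae_tendsto_of_integrable_le [IsFiniteMeasure μ]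
    {f : ℕ → Ω → ℝ} {g : Ω → ℝ}
    (hf : Supermartingale f ℱ μ) (hg : Integrable g μ) (hgf : ∀ n, g ≤ᵐ[μ] f n) :
    ∀ᵐ ω ∂μ, ∃ c, Tendsto (fun n => f n ω) atTop (nhds c) := by
  have hbdd : ∀ n, eLpNorm ((-f) n) 1 μ ≤ (∫ ω, f 0 ω + 2 * |g ω| ∂μ).toNNReal := by
    intro n
    have hnorm : ∀ᵐ ω ∂μ, ‖f n ω‖ ≤ f n ω + 2 * |g ω| := by
      filter_upwards [hgf n] with ω hω
      rw [Real.norm_eq_abs, abs_le]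
      constructor <;> cases abs_cases (g ω) <;> linarith
    have hint : Integrable (fun ω => f n ω + 2 * |g ω|) μ :=
      (hf.integrable n).add (hg.abs.const_mul 2)
    rw [Pi.neg_apply, eLpNorm_neg, eLpNorm_one_eq_lintegral_enorm,
      ← ofReal_integral_norm_eq_lintegral_enorm (hf.integrable n)]
    refine ENNReal.ofReal_le_ofReal ?_
    calc ∫ ω, ‖f n ω‖ ∂μ ≤ ∫ ω, f n ω + 2 * |g ω| ∂μ :=
          integral_mono_ae (hf.integrable n).norm hint hnorm
      _ ≤ ∫ ω, f 0 ω + 2 * |g ω| ∂μ := by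
          rw [integral_add (hf.integrable n) (hg.abs.const_mul 2),
            integral_add (hf.integrable 0) (hg.abs.const_mul 2)]
          have := hf.setIntegral_le (Nat.zero_le n) MeasurableSet.univ
          simp only [Measure.restrict_univ] at this
          linarith
  filter_upwards [hf.neg.exists_ae_tendsto_of_bdd hbdd] with ω ⟨c, hc⟩
  exact ⟨-c, by simpa using hc.neg⟩

theorem Adapted.stronglyAdapted_stopWeight {H : ℕ → Ω → ℝ} (hH : Adapted ℱ H) (a : ℝ) :
    StronglyAdapted ℱ fun i ω => stopWeight (fun j => H j ω) a i := by
  intro i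
  have hset : MeasurableSet[ℱ i] {ω | ∀ j ≤ i, H j ω ≤ a} := by
    simp only [Set.ofPred_forall]
    exact .iInter fun j => .iInter fun hj => measurableSet_le (hH.measurable_le hj) measurable_const
  exact StronglyMeasurable.ite hset stronglyMeasurable_const stronglyMeasurable_const

theorem Supermartingale.ae_exists_tendsto_of_bddAbove [IsFiniteMeasure μ] {Y H : ℕ → Ω → ℝ}
    (hY : Supermartingale Y ℱ μ) (hH : Adapted ℱ H) (hHY : ∀ n ω, -H n ω ≤ Y (n + 1) ω) :
    ∀ᵐ ω ∂μ, BddAbove (Set.range fun n => H n ω) →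
      ∃ c, Tendsto (fun n => Y n ω) atTop (nhds c) := by
  set V : ℕ → ℕ → Ω → ℝ := fun a n ω =>
    ∑ i ∈ range n, stopWeight (fun j => H j ω) a i * (Y (i + 1) ω - Y i ω)
  have hV : ∀ a : ℕ, Supermartingale (V a) ℱ μ := fun a => by
    have hVeq : V a = -fun n => ∑ i ∈ range n,
        (fun ω => stopWeight (fun j => H j ω) a i) * ((-Y) (i + 1) - (-Y) i) := by
      funext n ω
      simp only [V, Pi.neg_apply, Finset.sum_apply, Pi.mul_apply, Pi.sub_apply,
        ← sum_neg_distrib]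
      ring_nf
    rw [hVeq]
    exact (hY.neg.sum_mul_sub (hH.stronglyAdapted_stopWeight a) (fun _ _ => stopWeight_le_one _)
      fun _ _ => stopWeight_nonneg _).neg
  have hVconv : ∀ a : ℕ, ∀ᵐ ω ∂μ, ∃ c, Tendsto (fun n => V a n ω) atTop (nhds c) := fun a =>
    (hV a).exists_ae_tendsto_of_integrable_le (g := fun ω => -(a : ℝ) - |Y 0 ω|)
      ((integrable_const _).sub (hY.integrable 0).abs)
      fun n => ae_of_all _ fun ω =>
        neg_sub_abs_le_sum_stopWeight_mul_sub (y := (Y · ω)) (fun n => hHY n ω) a.cast_nonneg n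
  rw [← ae_all_iff] at hVconv
  filter_upwards [hVconv] with ω hω ⟨b, hb⟩
  obtain ⟨a, ha⟩ := exists_nat_ge b
  obtain ⟨c, hc⟩ := hω a
  refine ⟨c + Y 0 ω, (hc.add_const _).congr fun n => ?_⟩
  simp only [V]
  rw [sum_stopWeight_mul_sub_of_forall_le (y := (Y · ω)) fun j _ => (hb ⟨j, rfl⟩).trans ha,
    sub_add_cancel]

end MeasureTheory

namespace RobbinsSiegmund

variable {Ω : Type*}

noncomputable def discount (δ : ℕ → Ω → ℝ) (t : ℕ) (ω : Ω) : ℝ :=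
  ∏ s ∈ range t, (1 + δ s ω)

noncomputable def compensated (z δ γ ψ : ℕ → Ω → ℝ) (t : ℕ) (ω : Ω) : ℝ :=
  z t ω / discount δ t ω + ∑ s ∈ range t, (ψ s ω - γ s ω) / discount δ (s + 1) ω

variable {z δ γ ψ : ℕ → Ω → ℝ} {ω : Ω}

theorem discount_succ (t : ℕ) : discount δ (t + 1) ω = discount δ t ω * (1 + δ t ω) :=
  prod_range_succ _ _

variable (hδ : ∀ t, 0 ≤ δ t ω)
include hδ

theorem one_le_discount (t : ℕ) : 1 ≤ discount δ t ω :=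
  one_le_prod fun s _ => le_add_of_nonneg_right (hδ s)

theorem discount_pos (t : ℕ) : 0 < discount δ t ω :=
  one_pos.trans_le (one_le_discount hδ t)

theorem norm_inv_discount_le_one (t : ℕ) : ‖(discount δ t ω)⁻¹‖ ≤ 1 := by
  rw [norm_inv, Real.norm_of_nonneg (discount_pos hδ t).le]
  exact inv_le_one_of_one_le₀ (one_le_discount hδ t)

theorem monotone_discount : Monotone fun t => discount δ t ω :=
  monotone_nat_of_le_succ fun t => by
    rw [discount_succ]
    exact le_mul_of_one_le_right (discount_pos hδ t).le (le_add_of_nonneg_right (hδ t))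

theorem discount_le_exp_tsum (hδs : Summable fun t => δ t ω) (t : ℕ) :
    discount δ t ω ≤ Real.exp (∑' s, δ s ω) :=
  calc discount δ t ω ≤ ∏ s ∈ range t, Real.exp (δ s ω) :=
        prod_le_prod (fun s _ => by linarith [hδ s]) fun s _ => by
          rw [add_comm]; exact Real.add_one_le_exp _
    _ = Real.exp (∑ s ∈ range t, δ s ω) := (Real.exp_sum _ _).symm
    _ ≤ Real.exp (∑' s, δ s ω) := Real.exp_le_exp.mpr (hδs.sum_le_tsum _ fun s _ => hδ s)

theorem exists_tendsto_discount (hδs : Summable fun t => δ t ω) :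
    ∃ P, (∀ t, discount δ t ω ≤ P) ∧ Tendsto (fun t => discount δ t ω) atTop (nhds P) := by
  have hbdd : BddAbove (Set.range fun t => discount δ t ω) :=
    ⟨_, Set.forall_mem_range.mpr (discount_le_exp_tsum hδ hδs)⟩
  exact ⟨_, fun t => le_ciSup hbdd t, tendsto_atTop_ciSup (monotone_discount hδ) hbdd⟩

theorem neg_sum_le_compensated (hz : ∀ t, 0 ≤ z t ω) (hγ : ∀ t, 0 ≤ γ t ω)
    (hψ : ∀ t, 0 ≤ ψ t ω) (t : ℕ) :
    -∑ s ∈ range t, γ s ω ≤ compensated z δ γ ψ t ω := by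
  have hterm : ∀ s ∈ range t, -γ s ω ≤ (ψ s ω - γ s ω) / discount δ (s + 1) ω := fun s _ => by
    rw [le_div_iff₀ (discount_pos hδ _)]
    nlinarith [one_le_discount hδ (s + 1), hγ s, hψ s]
  have := div_nonneg (hz t) (discount_pos hδ t).le
  rw [compensated, ← sum_neg_distrib]
  linarith [sum_le_sum hterm]

theorem inv_discount_mul_add_sum_eq_compensated (t : ℕ) :
    (discount δ (t + 1) ω)⁻¹ * ((1 + δ t ω) * z t ω + γ t ω - ψ t ω) +
      ∑ s ∈ range (t + 1), (ψ s ω - γ s ω) / discount δ (s + 1) ω = compensated z δ γ ψ t ω := by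
  have := (discount_pos hδ t).ne'
  have : 1 + δ t ω ≠ 0 := by linarith [hδ t]
  rw [compensated, sum_range_succ, discount_succ]
  field_simp
  ring

theorem summable_div_discount_of_summable (hγ : ∀ t, 0 ≤ γ t ω)
    (hγs : Summable fun t => γ t ω) : Summable fun s => γ s ω / discount δ (s + 1) ω :=
  hγs.of_nonneg_of_le (fun s => div_nonneg (hγ s) (discount_pos hδ _).le)
    fun s => div_le_self (hγ s) (one_le_discount hδ _)

theorem summable_div_discount_of_bddAbove (hz : ∀ t, 0 ≤ z t ω) (hγ : ∀ t, 0 ≤ γ t ω)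
    (hψ : ∀ t, 0 ≤ ψ t ω)
    (hγs : Summable fun t => γ t ω) (hY : BddAbove (Set.range fun t => compensated z δ γ ψ t ω)) :
    Summable fun s => ψ s ω / discount δ (s + 1) ω := by
  obtain ⟨M, hM⟩ := hY
  have hγA := summable_div_discount_of_summable hδ hγ hγs
  refine summable_of_sum_range_le (fun s => div_nonneg (hψ s) (discount_pos hδ _).le)
    (c := M + ∑' s, γ s ω / discount δ (s + 1) ω) fun t => ?_
  have hsplit : ∑ s ∈ range t, ψ s ω / discount δ (s + 1) ω =
      compensated z δ γ ψ t ω - z t ω / discount δ t ω +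
        ∑ s ∈ range t, γ s ω / discount δ (s + 1) ω := by
    rw [compensated, add_sub_cancel_left, ← sum_add_distrib]
    exact sum_congr rfl fun s _ => by ring
  rw [hsplit]
  have := div_nonneg (hz t) (discount_pos hδ t).le
  have := hγA.sum_le_tsum (range t) fun s _ => div_nonneg (hγ s) (discount_pos hδ _).le
  linarith [hM ⟨t, rfl⟩]

theorem tendsto_and_summable_of_tendsto_compensated (hz : ∀ t, 0 ≤ z t ω)
    (hγ : ∀ t, 0 ≤ γ t ω) (hψ : ∀ t, 0 ≤ ψ t ω) (hδs : Summable fun t => δ t ω)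
    (hγs : Summable fun t => γ t ω) {c : ℝ}
    (hY : Tendsto (fun t => compensated z δ γ ψ t ω) atTop (nhds c)) :
    (∃ l, Tendsto (fun t => z t ω) atTop (nhds l)) ∧ Summable fun t => ψ t ω := by
  obtain ⟨P, hPle, hP⟩ := exists_tendsto_discount hδ hδs
  have hψA := summable_div_discount_of_bddAbove hδ hz hγ hψ hγs hY.bddAbove_range
  have hγA := summable_div_discount_of_summable hδ hγ hγs
  have hdiff : Summable fun s => (ψ s ω - γ s ω) / discount δ (s + 1) ω := by
    simpa only [sub_div] using hψA.sub hγA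
  constructor
  · refine ⟨(c - ∑' s, (ψ s ω - γ s ω) / discount δ (s + 1) ω) * P,
      ((hY.sub hdiff.hasSum.tendsto_sum_nat).mul hP).congr fun t => ?_⟩
    rw [compensated, add_sub_cancel_right, div_mul_cancel₀ _ (discount_pos hδ t).ne']
  · refine (hψA.mul_left P).of_nonneg_of_le hψ fun s => ?_
    rw [mul_div_assoc', le_div_iff₀ (discount_pos hδ _), mul_comm P]
    exact mul_le_mul_of_nonneg_left (hPle _) (hψ s)

omit hδ

variable {m0 : MeasurableSpace Ω} {μ : Measure Ω} {ℱ : Filtration ℕ m0}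

theorem adapted_discount (hδ : Adapted ℱ δ) : Adapted ℱ (discount δ) := fun _ =>
  Finset.measurable_prod _ fun _ hs =>
    measurable_const.add (hδ.measurable_le (mem_range.mp hs).le)

theorem measurable_discount_succ (hδ : Adapted ℱ δ) (t : ℕ) :
    Measurable[ℱ t] (discount δ (t + 1)) :=
  Finset.measurable_prod _ fun _ hs =>
    measurable_const.add (hδ.measurable_le (Nat.lt_succ_iff.mp (mem_range.mp hs)))

theorem measurable_compensated_term (hδ : Adapted ℱ δ) (hγ : Adapted ℱ γ) (hψ : Adapted ℱ ψ)
    (s : ℕ) : Measurable[ℱ s] fun ω => (ψ s ω - γ s ω) / discount δ (s + 1) ω :=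
  ((hψ s).sub (hγ s)).div (measurable_discount_succ hδ s)

theorem adapted_compensated (hz : Adapted ℱ z) (hδ : Adapted ℱ δ) (hγ : Adapted ℱ γ)
    (hψ : Adapted ℱ ψ) : Adapted ℱ (compensated z δ γ ψ) := fun t =>
  ((hz t).div (adapted_discount hδ t)).add (Finset.measurable_sum _ fun s hs =>
    (measurable_compensated_term hδ hγ hψ s).mono (ℱ.mono (mem_range.mp hs).le) le_rfl)

theorem integrable_div_discount {f : Ω → ℝ} (hf : Integrable f μ) (hδ : Adapted ℱ δ)
    (hδnn : ∀ t ω, 0 ≤ δ t ω) (t : ℕ) : Integrable (fun ω => f ω / discount δ t ω) μ := by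
  simp only [div_eq_mul_inv]
  exact hf.mul_bdd ((adapted_discount hδ t).mono (ℱ.le t) le_rfl).inv.aestronglyMeasurable
    (ae_of_all _ fun ω => norm_inv_discount_le_one (hδnn · ω) t)

theorem integrable_compensated (hδ : Adapted ℱ δ) (hδnn : ∀ t ω, 0 ≤ δ t ω)
    (hzint : ∀ t, Integrable (z t) μ) (hγint : ∀ t, Integrable (γ t) μ)
    (hψint : ∀ t, Integrable (ψ t) μ) (t : ℕ) : Integrable (compensated z δ γ ψ t) μ :=
  (integrable_div_discount (hzint t) hδ hδnn t).add (integrable_finsetSum _ fun s _ =>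
    integrable_div_discount ((hψint s).sub (hγint s)) hδ hδnn (s + 1))

theorem supermartingale_compensated [IsFiniteMeasure μ] (hz : Adapted ℱ z) (hδ : Adapted ℱ δ)
    (hγ : Adapted ℱ γ) (hψ : Adapted ℱ ψ) (hδnn : ∀ t ω, 0 ≤ δ t ω)
    (hzint : ∀ t, Integrable (z t) μ) (hγint : ∀ t, Integrable (γ t) μ)
    (hψint : ∀ t, Integrable (ψ t) μ)
    (hrec : ∀ t, μ[z (t + 1) | ℱ t] ≤ᵐ[μ] fun ω => (1 + δ t ω) * z t ω + γ t ω - ψ t ω) :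
    Supermartingale (compensated z δ γ ψ) ℱ μ := by
  refine supermartingale_nat (adapted_compensated hz hδ hγ hψ).stronglyAdapted
    (integrable_compensated hδ hδnn hzint hγint hψint) fun t => ?_
  set C : Ω → ℝ := fun ω => ∑ s ∈ range (t + 1), (ψ s ω - γ s ω) / discount δ (s + 1) ω
  have hCmeas : StronglyMeasurable[ℱ t] C :=
    (Finset.measurable_sum _ fun s hs => (measurable_compensated_term hδ hγ hψ s).mono
      (ℱ.mono (Nat.lt_succ_iff.mp (mem_range.mp hs))) le_rfl).stronglyMeasurable
  have hCint : Integrable C μ := integrable_finsetSum _ fun s _ =>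
    integrable_div_discount ((hψint s).sub (hγint s)) hδ hδnn (s + 1)
  have hsplit :
      compensated z δ γ ψ (t + 1) = (fun ω => (discount δ (t + 1) ω)⁻¹) * z (t + 1) + C := by
    funext ω
    simp only [compensated, Pi.add_apply, Pi.mul_apply, C, div_eq_inv_mul (z (t + 1) ω)]
  have hpull : μ[(fun ω => (discount δ (t + 1) ω)⁻¹) * z (t + 1) | ℱ t] =ᵐ[μ]
      (fun ω => (discount δ (t + 1) ω)⁻¹) * μ[z (t + 1) | ℱ t] :=
    condExp_stronglyMeasurable_mul_of_bound (ℱ.le t)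
      (measurable_discount_succ hδ t).inv.stronglyMeasurable (hzint (t + 1)) 1
      (ae_of_all _ fun ω => norm_inv_discount_le_one (hδnn · ω) (t + 1))
  have hint : Integrable ((fun ω => (discount δ (t + 1) ω)⁻¹) * z (t + 1)) μ := by
    refine (integrable_div_discount (hzint (t + 1)) hδ hδnn (t + 1)).congr (ae_of_all _ fun ω => ?_)
    simp only [Pi.mul_apply, div_eq_inv_mul]
  rw [hsplit]
  filter_upwards [condExp_add hint hCint (ℱ t), hpull, hrec t] with ω hadd hmul hle
  rw [hadd, Pi.add_apply, hmul, condExp_of_stronglyMeasurable (ℱ.le t) hCmeas hCint,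
    ← inv_discount_mul_add_sum_eq_compensated (hδnn · ω)]
  simp only [Pi.mul_apply]
  gcongr
  exact inv_nonneg.mpr (discount_pos (hδnn · ω) _).le

end RobbinsSiegmund

theorem stmt10 {Ω : Type*} {m0 : MeasurableSpace Ω} (μ : Measure Ω) [IsProbabilityMeasure μ]
    (ℱ : Filtration ℕ m0)
    (z δ γ ψ : ℕ → Ω → ℝ)
    (hz : Adapted ℱ z) (hδ : Adapted ℱ δ) (hγ : Adapted ℱ γ) (hψ : Adapted ℱ ψ)
    (hznn : ∀ t ω, 0 ≤ z t ω) (hδnn : ∀ t ω, 0 ≤ δ t ω)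
    (hγnn : ∀ t ω, 0 ≤ γ t ω) (hψnn : ∀ t ω, 0 ≤ ψ t ω)
    (hzint : ∀ t, Integrable (z t) μ) (hγint : ∀ t, Integrable (γ t) μ)
    (hψint : ∀ t, Integrable (ψ t) μ)
    (hrec : ∀ t, μ[z (t + 1) | ℱ t] ≤ᵐ[μ]
      fun ω => (1 + δ t ω) * z t ω + γ t ω - ψ t ω) :
    ∀ᵐ ω ∂μ, (Summable (fun t => δ t ω) ∧ Summable (fun t => γ t ω)) →
      (∃ l : ℝ, Tendsto (fun t => z t ω) atTop (nhds l)) ∧ Summable (fun t => ψ t ω) := by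
  have hY := RobbinsSiegmund.supermartingale_compensated hz hδ hγ hψ hδnn hzint hγint hψint hrec
  have hpartial : Adapted ℱ fun n ω => ∑ s ∈ range (n + 1), γ s ω := fun _ =>
    Finset.measurable_sum _ fun _ hs => hγ.measurable_le (Nat.lt_succ_iff.mp (mem_range.mp hs))
  filter_upwards [hY.ae_exists_tendsto_of_bddAbove hpartial fun n ω =>
    RobbinsSiegmund.neg_sum_le_compensated (hδnn · ω) (hznn · ω) (hγnn · ω) (hψnn · ω) (n + 1)]
    with ω hconv ⟨hδs, hγs⟩
  obtain ⟨c, hc⟩ := hconv ⟨∑' s, γ s ω, Set.forall_mem_range.mpr fun n =>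
    hγs.sum_le_tsum _ fun s _ => hγnn s ω⟩
  exact RobbinsSiegmund.tendsto_and_summable_of_tendsto_compensated (hδnn · ω) (hznn · ω)
    (hγnn · ω) (hψnn · ω) hδs hγs hc
end

section
/- Suppose the search direction φ_{t+1} satisfies: ‖E[φ_{t+1}|F_t] + ∇J(θ_t)‖ ≤ b_t (bounded bias) and CV_t(φ_{t+1}) ≤ M_t²(1 + ‖∇J(θ_t)‖²) (bounded conditional variance), and J satisfies ‖∇J(θ)‖² ≤ H·(J(θ) − J*) for all θ. Then E[‖φ_{t+1}‖² | F_t] ≤ (b_t² + b_t + M_t²) + H(b_t + 1 + M_t²)·(J(θ_t) − J*), almost surely. -/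
open MeasureTheory

lemma condexp_clm_comm {α E F' : Type*} {m m0 : MeasurableSpace α} {μ : Measure α}
    [NormedAddCommGroup E] [NormedSpace ℝ E] [CompleteSpace E]
    [NormedAddCommGroup F'] [NormedSpace ℝ F'] [CompleteSpace F']
    (hm : m ≤ m0) [SigmaFinite (μ.trim hm)]
    (T : E →L[ℝ] F') {f : α → E} (hf : Integrable f μ) :
    (fun a => T ((μ[f|m]) a)) =ᵐ[μ] μ[fun a => T (f a)|m] := by
  refine ae_eq_condExp_of_forall_setIntegral_eq hm (T.integrable_comp hf) ?_ ?_ ?_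
  · intro s hs hμs
    exact (T.integrable_comp integrable_condExp).integrableOn
  · intro s hs hμs
    rw [T.integral_comp_comm integrable_condExp.integrableOn,
        T.integral_comp_comm hf.integrableOn, setIntegral_condExp hm hf hs]
  · exact (T.continuous.comp_stronglyMeasurable stronglyMeasurable_condExp).aestronglyMeasurable

lemma memLp_two_condexp {Ω : Type*} {m0 : MeasurableSpace Ω} {μ : Measure Ω}
    [IsFiniteMeasure μ] {d : ℕ} {F : MeasurableSpace Ω} (hF : F ≤ m0)
    {φ : Ω → EuclideanSpace ℝ (Fin d)} (hφ : MemLp φ 2 μ) :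
    MemLp (μ[φ|F]) 2 μ := by
  letI : MeasurableSpace Ω := m0
  have hφint : Integrable φ μ := hφ.integrable one_le_two
  set ξ := condExpL2 (EuclideanSpace ℝ (Fin d)) ℝ hF (hφ.toLp φ) with hξ
  have hmem := Lp.memLp (ξ : Lp (EuclideanSpace ℝ (Fin d)) 2 μ)
  have hgae := ae_eq_condExp_of_forall_setIntegral_eq (μ := μ) (f := φ) (m := F) hF hφint
    (fun s hs hμs => (integrable_condExpL2_of_isFiniteMeasure hF).integrableOn)
    (fun s hs hμs => by
      rw [integral_condExpL2_eq hF (hφ.toLp φ) hs hμs.ne]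
      exact setIntegral_congr_ae (hF s hs) ((hφ.coeFn_toLp).mono fun ω hω _ => hω))
    (lpMeas.aestronglyMeasurable ξ)
  exact hmem.ae_eq hgae

theorem stmt16 {Ω : Type*} (F : MeasurableSpace Ω) {m0 : MeasurableSpace Ω} (μ : Measure Ω) [IsProbabilityMeasure μ]
    {d : ℕ} (hF : F ≤ m0)
    (J : EuclideanSpace ℝ (Fin d) → ℝ) (Jstar : ℝ) (hJ : ContDiff ℝ 1 J)
    (H : ℝ) (hJ1 : ∀ x, ‖gradient J x‖ ^ 2 ≤ H * (J x - Jstar))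
    (θ : Ω → EuclideanSpace ℝ (Fin d)) (hθ : Measurable[F] θ)
    (φ : Ω → EuclideanSpace ℝ (Fin d)) (hφmeas : Measurable φ) (hφ : MemLp φ 2 μ)
    (b M : ℝ) (hb : 0 ≤ b) (hM : 0 ≤ M)
    (hbias : ∀ᵐ ω ∂μ, ‖(μ[φ | F]) ω + gradient J (θ ω)‖ ≤ b)
    (hvar : ∀ᵐ ω ∂μ,
      (μ[fun ω' => ‖φ ω' - (μ[φ | F]) ω'‖ ^ 2 | F]) ω
        ≤ M ^ 2 * (1 + ‖gradient J (θ ω)‖ ^ 2)) :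
    ∀ᵐ ω ∂μ,
      (μ[fun ω' => ‖φ ω'‖ ^ 2 | F]) ω
        ≤ (b ^ 2 + b + M ^ 2) + H * (b + 1 + M ^ 2) * (J (θ ω) - Jstar) := by
  letI : MeasurableSpace Ω := m0
  set g : Ω → EuclideanSpace ℝ (Fin d) := μ[φ|F] with hg_def
  have hφint : Integrable φ μ := hφ.integrable one_le_two
  have hgSM : StronglyMeasurable[F] g := stronglyMeasurable_condExp
  have hgL2 : MemLp g 2 μ := memLp_two_condexp hF hφ
  have hdL2 : MemLp (fun ω => φ ω - g ω) 2 μ := by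
    have := hφ.sub hgL2
    exact this
  -- integrability facts
  have hd2int : Integrable (fun ω => ‖φ ω - g ω‖ ^ 2) μ := by
    have := hdL2.norm.integrable_sq
    simpa using this
  have hg2int : Integrable (fun ω => ‖g ω‖ ^ 2) μ := by
    have := hgL2.norm.integrable_sq
    simpa using this
  -- coordinate functions
  have hgiL2 : ∀ i : Fin d, MemLp (fun ω => g ω i) 2 μ := fun i => by
    have := (EuclideanSpace.proj (𝕜 := ℝ) i).comp_memLp' hgL2
    simpa [Function.comp_def] using this
  have hdiL2 : ∀ i : Fin d, MemLp (fun ω => φ ω i - g ω i) 2 μ := fun i => by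
    have := (EuclideanSpace.proj (𝕜 := ℝ) i).comp_memLp' hdL2
    simpa [Function.comp_def] using this
  have hprodint : ∀ i : Fin d, Integrable (fun ω => g ω i * (φ ω i - g ω i)) μ := by
    intro i
    have := ((hdiL2 i).smul (r := 1) (hgiL2 i)
      ).integrable le_rfl
    exact this
  -- the cross term has zero conditional expectation
  have hcross : ∀ i : Fin d,
      μ[fun ω => g ω i * (φ ω i - g ω i)|F] =ᵐ[μ] 0 := by
    intro i
    have hgiSM : AEStronglyMeasurable[F] (fun ω => g ω i) μ :=
      ((EuclideanSpace.proj (𝕜 := ℝ) i).continuous.comp_stronglyMeasurable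
        hgSM).aestronglyMeasurable
    have hdiInt : Integrable (fun ω => φ ω i - g ω i) μ := (hdiL2 i).integrable one_le_two
    have hpull := condExp_mul_of_aestronglyMeasurable_left (m := F) hgiSM
      (hprodint i) hdiInt
    have hgiInt : Integrable (fun ω => g ω i) μ := (hgiL2 i).integrable one_le_two
    have hφiInt : Integrable (fun ω => φ ω i) μ := by
      have := (EuclideanSpace.proj (𝕜 := ℝ) i).integrable_comp hφint
      simpa [Function.comp] using this
    have hdi0 : μ[fun ω => φ ω i - g ω i|F] =ᵐ[μ] 0 := by
      have hsub := condExp_sub (m := F) (μ := μ) hφiInt hgiInt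
      have h1 := condexp_clm_comm hF (EuclideanSpace.proj (𝕜 := ℝ) i) hφint
      have h2 : μ[fun ω => g ω i|F] = fun ω => g ω i :=
        condExp_of_stronglyMeasurable hF
          ((EuclideanSpace.proj (𝕜 := ℝ) i).continuous.comp_stronglyMeasurable hgSM) hgiInt
      have h1' : (fun a => g a i) =ᵐ[μ] μ[fun a => φ a i|F] := by
        simpa [EuclideanSpace.proj, PiLp.proj_apply] using h1
      refine hsub.trans ?_
      rw [h2]
      filter_upwards [h1'] with ω hω
      simp only [Pi.sub_apply, Pi.zero_apply]
      rw [← hω]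
      simp
    calc μ[fun ω => g ω i * (φ ω i - g ω i)|F]
        =ᵐ[μ] (fun ω => g ω i) * μ[fun ω => φ ω i - g ω i|F] := by
          exact hpull
      _ =ᵐ[μ] 0 := by
          filter_upwards [hdi0] with ω hω
          simp only [Pi.mul_apply, Pi.zero_apply] at *
          simp [hω]
  -- cross term sum
  have hcint : Integrable (fun ω => ∑ i, g ω i * (φ ω i - g ω i)) μ :=
    integrable_finset_sum _ fun i _ => hprodint i
  have hcsum : μ[fun ω => ∑ i : Fin d, g ω i * (φ ω i - g ω i)|F] =ᵐ[μ] 0 := by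
    have hfe : (fun ω => ∑ i : Fin d, g ω i * (φ ω i - g ω i))
        = ∑ i : Fin d, (fun ω => g ω i * (φ ω i - g ω i)) := by
      funext ω; simp
    rw [hfe]
    have := condExp_finsetSum (m := F) (μ := μ)
      (f := fun i ω => g ω i * (φ ω i - g ω i)) (s := Finset.univ)
      (fun i _ => hprodint i)
    refine this.trans ?_
    have : ∀ᵐ ω ∂μ, ∀ i : Fin d, (μ[fun ω' => g ω' i * (φ ω' i - g ω' i)|F]) ω = 0 := by
      rw [ae_all_iff]
      intro i
      filter_upwards [hcross i] with ω hω using hω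
    filter_upwards [this] with ω hω
    simp only [Finset.sum_apply, Pi.zero_apply]
    exact Finset.sum_eq_zero fun i _ => hω i
  -- pointwise decomposition
  have hdecomp : (fun ω => ‖φ ω‖ ^ 2) = fun ω =>
      ‖φ ω - g ω‖ ^ 2 + ((2 : ℝ) * ∑ i, g ω i * (φ ω i - g ω i) + ‖g ω‖ ^ 2) := by
    funext ω
    have h1 : φ ω = (φ ω - g ω) + g ω := by abel
    have h2 : ‖(φ ω - g ω) + g ω‖ ^ 2
        = ‖φ ω - g ω‖ ^ 2 + 2 * (inner ℝ (φ ω - g ω) (g ω) : ℝ) + ‖g ω‖ ^ 2 :=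
      norm_add_sq_real _ _
    have h3 : (inner ℝ (φ ω - g ω) (g ω) : ℝ) = ∑ i, g ω i * (φ ω i - g ω i) := by
      rw [PiLp.inner_apply]
      refine Finset.sum_congr rfl fun i _ => ?_
      simp [RCLike.inner_apply, mul_comm]
    rw [← h1] at h2
    rw [h2, h3]; ring
  -- condexp linearity
  have hlin : μ[fun ω' => ‖φ ω'‖ ^ 2|F] =ᵐ[μ]
      μ[fun ω => ‖φ ω - g ω‖ ^ 2|F]
        + μ[fun ω => (2 : ℝ) * ∑ i, g ω i * (φ ω i - g ω i) + ‖g ω‖ ^ 2|F] := by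
    rw [hdecomp]
    exact condExp_add hd2int ((hcint.const_mul 2).add hg2int) F
  have hlin2 : μ[fun ω => (2 : ℝ) * ∑ i, g ω i * (φ ω i - g ω i) + ‖g ω‖ ^ 2|F] =ᵐ[μ]
      μ[fun ω => (2 : ℝ) * ∑ i, g ω i * (φ ω i - g ω i)|F] + μ[fun ω => ‖g ω‖ ^ 2|F] :=
    condExp_add (hcint.const_mul 2) hg2int F
  have hsmul : μ[fun ω => (2 : ℝ) * ∑ i, g ω i * (φ ω i - g ω i)|F] =ᵐ[μ] 0 := by
    have h := condExp_smul (m := F) (μ := μ) (2 : ℝ)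
      (fun ω => ∑ i, g ω i * (φ ω i - g ω i))
    have heq : ((2 : ℝ) • fun ω => ∑ i, g ω i * (φ ω i - g ω i))
        = (fun ω => (2 : ℝ) * ∑ i, g ω i * (φ ω i - g ω i)) := by
      funext ω; simp
    rw [heq] at h
    refine h.trans ?_
    filter_upwards [hcsum] with ω hω
    simp only [Pi.smul_apply, Pi.zero_apply, smul_eq_mul] at *
    rw [hω]; ring
  have hgn : μ[fun ω => ‖g ω‖ ^ 2|F] = fun ω => ‖g ω‖ ^ 2 :=
    condExp_of_stronglyMeasurable hF
      (((continuous_norm.pow 2)).comp_stronglyMeasurable hgSM) hg2int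
  -- combine
  filter_upwards [hlin, hlin2, hsmul, hbias, hvar] with ω e1 e2 e3 hbω hvω
  have key : (μ[fun ω' => ‖φ ω'‖ ^ 2|F]) ω
      = (μ[fun ω' => ‖φ ω' - g ω'‖ ^ 2|F]) ω + ‖g ω‖ ^ 2 := by
    rw [e1]
    simp only [Pi.add_apply]
    rw [e2]
    simp only [Pi.add_apply]
    rw [e3, hgn]
    simp
  set G := ‖gradient J (θ ω)‖ with hG
  have hGnn : 0 ≤ G := norm_nonneg _
  have hgle : ‖g ω‖ ≤ b + G := by
    calc ‖g ω‖ = ‖(g ω + gradient J (θ ω)) - gradient J (θ ω)‖ := by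
          rw [add_sub_cancel_right]
      _ ≤ ‖g ω + gradient J (θ ω)‖ + ‖gradient J (θ ω)‖ := norm_sub_le _ _
      _ ≤ b + G := add_le_add hbω le_rfl
  have hJω : G ^ 2 ≤ H * (J (θ ω) - Jstar) := hJ1 _
  have hvω' : (μ[fun ω' => ‖φ ω' - g ω'‖ ^ 2|F]) ω ≤ M ^ 2 * (1 + G ^ 2) := hvω
  have hgsq : ‖g ω‖ ^ 2 ≤ (b + G) ^ 2 :=
    pow_le_pow_left₀ (norm_nonneg _) hgle 2
  rw [key]
  nlinarith [sq_nonneg (G - 1), sq_nonneg G, mul_nonneg hb (sq_nonneg (G - 1)),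
    mul_le_mul_of_nonneg_left hJω (by positivity : (0:ℝ) ≤ b + 1 + M ^ 2),
    mul_nonneg (mul_nonneg hM hM) (sq_nonneg G)]
end

section
/- Let J : ℝ^d → ℝ be C¹ with ∇J L-Lipschitz and satisfy ‖∇J(θ)‖² ≤ H(J(θ) − J*). Let μ ∈ [0,1), v, z ∈ ℝ^d and θ = z − (μ/(1−μ))v. Then J(θ) − J* ≤ (1 + H/2)(J(z) − J*) + (μ²(1+L)/(2(1−μ)²))‖v‖². -/
/-!
Descent lemma at `z` in the direction `θ - z`, then Young's inequality
`⟪∇J z, θ - z⟫ ≤ ‖∇J z‖² / 2 + ‖θ - z‖² / 2` on the linear term, and finally the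
gradient-domination bound `‖∇J z‖² ≤ H (J z - J*)`. The descent lemma itself comes from
comparing `t ↦ J (x + t (y - x))` on `[0, 1]` with a quadratic whose derivative dominates its
derivative there, by the Lipschitz continuity of `∇J`.
-/

open InnerProductSpace Set

variable {E : Type*} [NormedAddCommGroup E] [InnerProductSpace ℝ E] [CompleteSpace E]

theorem hasDerivAt_comp_add_smul_of_differentiable {J : E → ℝ} (hJ : Differentiable ℝ J)
    (x w : E) (t : ℝ) :
    HasDerivAt (fun s : ℝ => J (x + s • w)) ⟪gradient J (x + t • w), w⟫_ℝ t := by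
  have hline : HasDerivAt (fun s : ℝ => x + s • w) w t := by
    simpa using ((hasDerivAt_id t).smul_const w).const_add x
  have h := (hJ (x + t • w)).hasGradientAt.hasFDerivAt.comp_hasDerivAt t hline
  rwa [toDual_apply_apply] at h

theorem le_add_inner_gradient_add_of_lipschitzWith_gradient {J : E → ℝ} {L : NNReal}
    (hJ : Differentiable ℝ J) (hL : LipschitzWith L (gradient J)) (x y : E) :
    J y ≤ J x + ⟪gradient J x, y - x⟫_ℝ + L / 2 * ‖y - x‖ ^ 2 := by
  set w := y - x
  have hderiv := hasDerivAt_comp_add_smul_of_differentiable hJ x w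
  have hbound : ∀ t ∈ Ico (0 : ℝ) 1,
      ⟪gradient J (x + t • w), w⟫_ℝ ≤ ⟪gradient J x, w⟫_ℝ + L * t * ‖w‖ ^ 2 := by
    intro t ht
    have hlip : ‖gradient J (x + t • w) - gradient J x‖ ≤ L * (t * ‖w‖) := by
      simpa [dist_eq_norm, norm_smul, abs_of_nonneg ht.1] using
        hL.dist_le_mul (x + t • w) x
    calc ⟪gradient J (x + t • w), w⟫_ℝ
        = ⟪gradient J x, w⟫_ℝ + ⟪gradient J (x + t • w) - gradient J x, w⟫_ℝ := by
          rw [inner_sub_left]; ring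
      _ ≤ ⟪gradient J x, w⟫_ℝ + ‖gradient J (x + t • w) - gradient J x‖ * ‖w‖ := by
          gcongr; exact real_inner_le_norm _ _
      _ ≤ ⟪gradient J x, w⟫_ℝ + L * (t * ‖w‖) * ‖w‖ := by gcongr
      _ = ⟪gradient J x, w⟫_ℝ + L * t * ‖w‖ ^ 2 := by ring
  have hmodel : ∀ t : ℝ, HasDerivAt
      (fun s : ℝ => J x + s * ⟪gradient J x, w⟫_ℝ + L / 2 * s ^ 2 * ‖w‖ ^ 2)
      (⟪gradient J x, w⟫_ℝ + L * t * ‖w‖ ^ 2) t := by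
    intro t
    refine ((((hasDerivAt_id t).mul_const ⟪gradient J x, w⟫_ℝ).const_add (J x)).add
      (((hasDerivAt_pow 2 t).const_mul ((L : ℝ) / 2)).mul_const (‖w‖ ^ 2))).congr_deriv ?_
    simp only [Nat.cast_ofNat]
    ring
  have hcomparison := image_le_of_deriv_right_le_deriv_boundary
    (fun t _ => (hderiv t).continuousAt.continuousWithinAt)
    (fun t _ => (hderiv t).hasDerivWithinAt) (by simp)
    (fun t _ => (hmodel t).continuousAt.continuousWithinAt)
    (fun t _ => (hmodel t).hasDerivWithinAt) hbound (right_mem_Icc.mpr zero_le_one)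
  simpa [w] using hcomparison

theorem le_add_norm_gradient_sq_add_of_lipschitzWith_gradient {J : E → ℝ} {L : NNReal}
    (hJ : Differentiable ℝ J) (hL : LipschitzWith L (gradient J)) (x y : E) :
    J y ≤ J x + ‖gradient J x‖ ^ 2 / 2 + (1 + L) / 2 * ‖y - x‖ ^ 2 := by
  have hyoung : ⟪gradient J x, y - x⟫_ℝ ≤ ‖gradient J x‖ ^ 2 / 2 + ‖y - x‖ ^ 2 / 2 := by
    nlinarith [real_inner_le_norm (gradient J x) (y - x),
      sq_nonneg (‖gradient J x‖ - ‖y - x‖)]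
  linarith [le_add_inner_gradient_add_of_lipschitzWith_gradient hJ hL x y]

theorem stmt17_general {d : ℕ} (J : EuclideanSpace ℝ (Fin d) → ℝ) (L : NNReal) (Jstar H : ℝ)
    (hJ : ContDiff ℝ 1 J) (hL : LipschitzWith L (gradient J))
    (hJ1 : ∀ x, ‖gradient J x‖ ^ 2 ≤ H * (J x - Jstar))
    (μ : ℝ)
    (v z θ : EuclideanSpace ℝ (Fin d)) (hθ : θ = z - (μ / (1 - μ)) • v) :
    J θ - Jstar ≤ (1 + H / 2) * (J z - Jstar)
      + (μ ^ 2 * (1 + L) / (2 * (1 - μ) ^ 2)) * ‖v‖ ^ 2 := by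
  have hdist : ‖θ - z‖ ^ 2 = μ ^ 2 / (1 - μ) ^ 2 * ‖v‖ ^ 2 := by
    rw [hθ, sub_sub_cancel_left, norm_neg, norm_smul, mul_pow, Real.norm_eq_abs, sq_abs,
      div_pow]
  have hdescent := le_add_norm_gradient_sq_add_of_lipschitzWith_gradient
    (hJ.differentiable one_ne_zero) hL z θ
  have hcoeff : μ ^ 2 * (1 + L) / (2 * (1 - μ) ^ 2) * ‖v‖ ^ 2
      = (1 + L) / 2 * ‖θ - z‖ ^ 2 := by
    rw [hdist, mul_comm 2, ← div_div]; ring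
  linarith [hJ1 z]

theorem stmt17 {d : ℕ} (J : EuclideanSpace ℝ (Fin d) → ℝ) (L : NNReal) (Jstar H : ℝ)
    (hJ : ContDiff ℝ 1 J) (hL : LipschitzWith L (gradient J))
    (hJ1 : ∀ x, ‖gradient J x‖ ^ 2 ≤ H * (J x - Jstar))
    (hmin : ∀ x, Jstar ≤ J x)
    (μ : ℝ) (hμ : μ ∈ Set.Ico (0 : ℝ) 1)
    (v z θ : EuclideanSpace ℝ (Fin d)) (hθ : θ = z - (μ / (1 - μ)) • v) :
    J θ - Jstar ≤ (1 + H / 2) * (J z - Jstar)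
      + (μ ^ 2 * (1 + L) / (2 * (1 - μ) ^ 2)) * ‖v‖ ^ 2 :=
  stmt17_general J L Jstar H hJ hL hJ1 μ v z θ hθ
end

section
/- Let (X_t) be nonnegative reals, (α_t) a decreasing sequence of positive reals with Σ_t α_t X_t < ∞ and Σ_{t≥1} α_t / (Σ_{τ=0}^{t−1} α_τ) = ∞. Define w_t = 2α_t/(Σ_{τ=0}^{t−1} α_τ) and Y_{t+1} = (1−w_t)Y_t + w_t X_t with Y_0 = X_0. Then Y_t = o(1/Σ_{τ=0}^{t−1} α_τ) and min_{0≤τ≤t} X_τ = o(1/Σ_{τ=0}^{t−1} α_τ) as t → ∞. -/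
/-!
Write `A t = ∑ τ < t, α τ`. Since `α` is decreasing, `2 α t ≤ A t` for `t ≥ 2`, and then
`(A t + α t)² (1 - w t) ≤ (A t)²`: the quantity `(A t)² |Y t|` grows by at most `8 A t α t X t`
per step. Hence `|Y t| A t ≤ (C + 8 ∑ τ < t, A τ α τ X τ) / A t` for a constant `C`, which
tends to `0` by Kronecker's lemma because `A t → ∞` (forced by the divergence of `∑ α t / A t`).
For the running minimum `m t`, `m t A t = ∑ τ < t, α τ m t` with `α τ m t ≤ α τ X τ` summable and
`m t → 0`, so Tannery's theorem (dominated convergence for series) applies; Kronecker's lemma is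
proved the same way.
-/

open Filter Finset Topology

theorem tendsto_sum_range_of_dominated {G : Type*} [NormedAddCommGroup G] [CompleteSpace G]
    {f : ℕ → ℕ → G} {bound : ℕ → ℝ} (h_sum : Summable bound)
    (h_lim : ∀ k, Tendsto (f · k) atTop (𝓝 0)) (h_bound : ∀ n k, k < n → ‖f n k‖ ≤ bound k) :
    Tendsto (fun n => ∑ k ∈ range n, f n k) atTop (𝓝 0) := by
  have h := tendsto_tsum_of_dominated_convergence (𝓕 := atTop) (g := 0) h_sum
    (f := fun n => (range n : Set ℕ).indicator (f n)) (fun k => ?_) (.of_forall fun n k => ?_)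
  · simpa only [Pi.zero_apply, tsum_zero, ← sum_eq_tsum_indicator] using h
  · refine (h_lim k).congr' ((eventually_gt_atTop k).mono fun n hn => ?_)
    simp [hn]
  · by_cases hk : k < n
    · simpa [hk] using h_bound n k hk
    · simpa [hk] using (norm_nonneg _).trans (h_bound (k + 1) k k.lt_succ_self)

theorem tendsto_sum_range_mul_div_of_summable {b c : ℕ → ℝ} (hb0 : ∀ k, 0 ≤ b k)
    (hb : Monotone b) (hbtop : Tendsto b atTop atTop) (hc : Summable fun k => |c k|) :
    Tendsto (fun n => (∑ k ∈ range n, b k * c k) / b n) atTop (𝓝 0) := by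
  simp_rw [sum_div]
  refine tendsto_sum_range_of_dominated hc (fun k => tendsto_const_nhds.div_atTop hbtop)
    fun n k hk => ?_
  rw [Real.norm_eq_abs, abs_div, abs_mul, abs_of_nonneg (hb0 k), abs_of_nonneg (hb0 n),
    mul_div_right_comm]
  exact mul_le_of_le_one_left (abs_nonneg _) (div_le_one_of_le₀ (hb hk.le) (hb0 n))

theorem tendsto_mul_sum_range_of_le_of_summable {m X α : ℕ → ℝ} (hm : ∀ n, 0 ≤ m n)
    (hmX : ∀ n k, k < n → m n ≤ X k) (hα : ∀ k, 0 ≤ α k)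
    (hαX : Summable fun k => α k * X k)
    (hαtop : Tendsto (fun n => ∑ k ∈ range n, α k) atTop atTop) :
    Tendsto (fun n => m n * ∑ k ∈ range n, α k) atTop (𝓝 0) := by
  have hαX0 : ∀ k, 0 ≤ α k * X k :=
    fun k => mul_nonneg (hα k) ((hm _).trans (hmX (k + 1) k k.lt_succ_self))
  have hterm : ∀ n k, k < n → α k * m n ≤ α k * X k :=
    fun n k hk => mul_le_mul_of_nonneg_left (hmX n k hk) (hα k)
  have hm_lim : Tendsto m atTop (𝓝 0) := by
    refine squeeze_zero' (.of_forall hm) ?_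
      (tendsto_const_nhds (x := ∑' k, α k * X k).div_atTop hαtop)
    filter_upwards [hαtop.eventually_gt_atTop 0] with n hn
    rw [le_div_iff₀ hn, mul_sum]
    calc ∑ k ∈ range n, m n * α k ≤ ∑ k ∈ range n, α k * X k :=
          sum_le_sum fun k hk => (mul_comm _ _).trans_le (hterm n k (mem_range.1 hk))
      _ ≤ ∑' k, α k * X k := hαX.sum_le_tsum _ fun k _ => hαX0 k
  simp_rw [mul_sum, mul_comm (m _)]
  refine tendsto_sum_range_of_dominated hαX (fun k => by simpa using hm_lim.const_mul (α k))
    fun n k hk => ?_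
  rw [Real.norm_eq_abs, abs_of_nonneg (mul_nonneg (hα k) (hm n))]
  exact hterm n k hk

theorem abs_sq_mul_averaging_step_le {a d x y : ℝ} (ha : 0 < a) (hd : 0 ≤ d) (hda : 2 * d ≤ a)
    (hx : 0 ≤ x) :
    |(a + d) ^ 2 * ((1 - 2 * d / a) * y + 2 * d / a * x)| ≤ a ^ 2 * |y| + 8 * (a * (d * x)) := by
  have hw1 : 2 * d / a ≤ 1 := (div_le_one ha).2 hda
  have hcontract : (a + d) ^ 2 * (1 - 2 * d / a) ≤ a ^ 2 := by
    rw [one_sub_div ha.ne', mul_div_assoc', div_le_iff₀ ha]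
    nlinarith [mul_nonneg hd (sq_nonneg d), mul_nonneg ha.le (sq_nonneg d)]
  have hinput : (a + d) ^ 2 * (2 * d / a * x) ≤ 8 * (a * (d * x)) := by
    rw [← mul_div_right_comm, mul_div_assoc', div_le_iff₀ ha]
    have : (a + d) ^ 2 ≤ 4 * a ^ 2 := by nlinarith
    nlinarith [mul_le_mul_of_nonneg_right this (mul_nonneg hd hx)]
  calc |(a + d) ^ 2 * ((1 - 2 * d / a) * y + 2 * d / a * x)|
      ≤ (a + d) ^ 2 * (1 - 2 * d / a) * |y| + (a + d) ^ 2 * (2 * d / a * x) := by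
        rw [mul_add, ← mul_assoc]
        refine (abs_add_le _ _).trans (add_le_add ?_ (abs_of_nonneg (by positivity)).le)
        rw [abs_mul, abs_of_nonneg (by nlinarith)]
    _ ≤ a ^ 2 * |y| + 8 * (a * (d * x)) := by gcongr

theorem tendsto_mul_sum_range_of_averaging {X α w Y : ℕ → ℝ} (hX : ∀ t, 0 ≤ X t)
    (hα : ∀ t, 0 < α t) (hdec : Antitone α) (hsum : Summable fun t => α t * X t)
    (hαtop : Tendsto (fun t => ∑ τ ∈ range t, α τ) atTop atTop)
    (hw : ∀ t, w t = 2 * α t / ∑ τ ∈ range t, α τ)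
    (hYrec : ∀ t, Y (t + 1) = (1 - w t) * Y t + w t * X t) :
    Tendsto (fun t => Y t * ∑ τ ∈ range t, α τ) atTop (𝓝 0) := by
  set A : ℕ → ℝ := fun t => ∑ τ ∈ range t, α τ with hA
  have hA0 : ∀ t, 0 ≤ A t := fun t => sum_nonneg fun τ _ => (hα τ).le
  have hAmono : Monotone A := fun s t hst =>
    sum_le_sum_of_subset_of_nonneg (range_subset_range.2 hst) fun τ _ _ => (hα τ).le
  have hAsucc : ∀ t, A (t + 1) = A t + α t := fun t => sum_range_succ _ _
  have hA2 : ∀ t, 2 ≤ t → 0 < A t ∧ 2 * α t ≤ A t := by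
    intro t ht
    have h2 : A 2 = α 0 + α 1 := by simp [hA, sum_range_succ]
    constructor <;>
      linarith [hα 0, hα 1, hAmono ht, hdec (Nat.zero_le t), hdec (show 1 ≤ t by omega)]
  set C := A 2 ^ 2 * |Y 2|
  have hbound : ∀ t, 2 ≤ t →
      A t ^ 2 * |Y t| ≤ C + 8 * ∑ τ ∈ range t, A τ * (α τ * X τ) := by
    refine Nat.le_induction ?_ fun t ht ih => ?_
    · have : 0 ≤ ∑ τ ∈ range 2, A τ * (α τ * X τ) :=
        sum_nonneg fun τ _ => mul_nonneg (hA0 τ) (mul_nonneg (hα τ).le (hX τ))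
      linarith
    · obtain ⟨hpos, hle⟩ := hA2 t ht
      have hstep := abs_sq_mul_averaging_step_le hpos (hα t).le hle (hX t) (y := Y t)
      rw [← hw, ← hYrec, ← hAsucc, abs_mul, abs_of_nonneg (sq_nonneg _)] at hstep
      rw [sum_range_succ]
      linarith
  have hlim :
      Tendsto (fun t => (C + 8 * ∑ τ ∈ range t, A τ * (α τ * X τ)) / A t) atTop (𝓝 0) := by
    simp_rw [add_div, mul_div_assoc]
    simpa using (tendsto_const_nhds.div_atTop hαtop).add
      ((tendsto_sum_range_mul_div_of_summable hA0 hAmono hαtop hsum.abs).const_mul 8)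
  refine squeeze_zero_norm' ((eventually_ge_atTop 2).mono fun t ht => ?_) hlim
  obtain ⟨hpos, -⟩ := hA2 t ht
  rw [Real.norm_eq_abs, le_div_iff₀ hpos, abs_mul, abs_of_pos hpos]
  nlinarith [hbound t ht]

theorem tendsto_sum_range_atTop_of_not_summable_div {α : ℕ → ℝ} (hα : ∀ t, 0 ≤ α t)
    (hα0 : 0 < α 0) (hdiv : ¬ Summable fun t => α t / ∑ τ ∈ range t, α τ) :
    Tendsto (fun t => ∑ τ ∈ range t, α τ) atTop atTop := by
  refine (not_summable_iff_tendsto_nat_atTop_of_nonneg hα).1 fun hsum => hdiv ?_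
  refine .of_nonneg_of_le (fun t => div_nonneg (hα t) (sum_nonneg fun τ _ => hα τ))
    (fun t => ?_) (hsum.div_const (α 0))
  rcases t with _ | t
  · simpa using div_nonneg (hα 0) hα0.le
  · refine div_le_div_of_nonneg_left (hα _) hα0 ?_
    exact single_le_sum (fun τ _ => hα τ) (mem_range.2 t.succ_pos)

theorem stmt18_general (X α : ℕ → ℝ)
    (hX : ∀ t, 0 ≤ X t) (hα : ∀ t, 0 < α t) (hdec : Antitone α)
    (hsum : Summable (fun t => α t * X t))
    (hdiv : ¬ Summable (fun t => α t / ∑ τ ∈ Finset.range t, α τ))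
    (w Y : ℕ → ℝ)
    (hw : ∀ t, w t = 2 * α t / ∑ τ ∈ Finset.range t, α τ)
    (hYrec : ∀ t, Y (t + 1) = (1 - w t) * Y t + w t * X t) :
    Tendsto (fun t => Y t * ∑ τ ∈ Finset.range t, α τ) atTop (nhds 0) ∧
      Tendsto (fun t =>
        ((Finset.range (t + 1)).inf' Finset.nonempty_range_add_one X)
          * ∑ τ ∈ Finset.range t, α τ) atTop (nhds 0) := by
  have hαtop := tendsto_sum_range_atTop_of_not_summable_div (fun t => (hα t).le) (hα 0) hdiv
  refine ⟨tendsto_mul_sum_range_of_averaging hX hα hdec hsum hαtop hw hYrec, ?_⟩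
  exact tendsto_mul_sum_range_of_le_of_summable (fun t => le_inf' _ _ fun τ _ => hX τ)
    (fun t τ hτ => inf'_le _ (mem_range.2 (by omega))) (fun τ => (hα τ).le) hsum hαtop

theorem stmt18 (X α : ℕ → ℝ)
    (hX : ∀ t, 0 ≤ X t) (hα : ∀ t, 0 < α t) (hdec : Antitone α)
    (hsum : Summable (fun t => α t * X t))
    (hdiv : ¬ Summable (fun t => α t / ∑ τ ∈ Finset.range t, α τ))
    (w Y : ℕ → ℝ)
    (hw : ∀ t, w t = 2 * α t / ∑ τ ∈ Finset.range t, α τ)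
    (hY0 : Y 0 = X 0)
    (hYrec : ∀ t, Y (t + 1) = (1 - w t) * Y t + w t * X t) :
    Tendsto (fun t => Y t * ∑ τ ∈ Finset.range t, α τ) atTop (nhds 0) ∧
      Tendsto (fun t =>
        ((Finset.range (t + 1)).inf' Finset.nonempty_range_add_one X)
          * ∑ τ ∈ Finset.range t, α τ) atTop (nhds 0) :=
  stmt18_general X α hX hα hdec hsum hdiv w Y hw hYrec
end
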